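/- arXiv:0805.1292 — 3 statements merged into one kernel-verified Lean document; each statement's English description precedes it below -/
import Mathlib

section
/- Let G = ([n], E) be a simple graph, let q_{i,j} ≥ 2 (for i < j) be pairwise coprime integers, and a_i := ∏_{ℓ≠i} q_{{i,ℓ}}. Then there exist integers α₁,…,α_n such that for all i ≠ j: α_i ≡ α_j (mod gcd(a_i,a_j)) if and only if {i,j} ∈ E. -/
/-!
Every factor `q i ℓ` of `a i` other than `q i j` is coprime to every factor of `a j`, so
`gcd (a i) (a j) = q i j` and it suffices to make `α i ≡ α j (mod q i j)` hold exactly on the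
edges. The moduli `q i j` with `i < j` are pairwise coprime, so by the Chinese remainder theorem
each `α k` may prescribe its residue modulo every `q i j` independently: take `α k ≡ 1` when `k = j`
and `{i, j}` is a non-edge, and `α k ≡ 0` otherwise. Then `α i ≡ α j (mod q i j)` compares `0` with
`0` on an edge and `0` with `1` on a non-edge, which differ since `q i j` is not a unit.
-/

open Finset Function

theorem Int.exists_modEq_of_pairwise_isCoprime {ι : Type*} [Finite ι] {m : ι → ℤ}
    (hm : Pairwise (IsCoprime on m)) (r : ι → ℤ) : ∃ x : ℤ, ∀ i, x ≡ r i [ZMOD m i] := by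
  have hI : Pairwise (IsCoprime on fun i => Ideal.span {m i}) := fun i j hij =>
    (Ideal.isCoprime_span_singleton_iff _ _).2 (hm hij)
  obtain ⟨x, hx⟩ := Ideal.pi_quotient_surjective hI fun i => Ideal.Quotient.mk _ (r i)
  refine ⟨x, fun i => ?_⟩
  rw [Int.modEq_iff_dvd, ← Ideal.mem_span_singleton, ← Ideal.Quotient.mk_eq_mk_iff_sub_mem]
  exact (hx i).symm

section PairProducts

variable {ι : Type*} [DecidableEq ι] {q : ι → ι → ℤ}

theorem pairwise_isCoprime_of_lt [LinearOrder ι]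
    (hcop : ∀ i j i' j', i ≠ j → i' ≠ j' →
      ({i, j} : Finset ι) ≠ {i', j'} → IsCoprime (q i j) (q i' j')) :
    Pairwise (IsCoprime on fun p : {p : ι × ι // p.1 < p.2} => q p.1.1 p.1.2) := by
  rintro ⟨⟨i, j⟩, hij⟩ ⟨⟨i', j'⟩, hij'⟩ hne
  refine hcop _ _ _ _ hij.ne hij'.ne fun h => hne ?_
  rw [← coe_inj, coe_pair, coe_pair, Set.pair_eq_pair_iff] at h
  rcases h with ⟨rfl, rfl⟩ | ⟨rfl, rfl⟩
  · rfl
  · exact (lt_asymm hij hij').elim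

variable [Fintype ι]

theorem isCoprime_prod_erase_erase
    (hcop : ∀ i j i' j', i ≠ j → i' ≠ j' →
      ({i, j} : Finset ι) ≠ {i', j'} → IsCoprime (q i j) (q i' j'))
    {i j : ι} (hij : i ≠ j) :
    IsCoprime (∏ ℓ ∈ (univ.erase i).erase j, q i ℓ) (∏ ℓ ∈ (univ.erase j).erase i, q j ℓ) := by
  refine IsCoprime.prod_left fun ℓ hℓ => IsCoprime.prod_right fun m hm => ?_
  simp only [mem_erase, mem_univ, and_true] at hℓ hm
  refine hcop i ℓ j m (Ne.symm hℓ.2) (Ne.symm hm.2) fun h => ?_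
  have hi : i ∈ ({j, m} : Finset ι) := h ▸ mem_insert_self i {ℓ}
  simp only [mem_insert, mem_singleton] at hi
  exact hi.elim hij fun him => hm.1 him.symm

theorem gcd_prod_erase_eq_abs (hsymm : ∀ i j, q i j = q j i)
    (hcop : ∀ i j i' j', i ≠ j → i' ≠ j' →
      ({i, j} : Finset ι) ≠ {i', j'} → IsCoprime (q i j) (q i' j'))
    {i j : ι} (hij : i ≠ j) :
    ((∏ ℓ ∈ univ.erase i, q i ℓ).gcd (∏ ℓ ∈ univ.erase j, q j ℓ) : ℤ) = |q i j| := by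
  rw [← mul_prod_erase _ (q i) (mem_erase.2 ⟨hij.symm, mem_univ j⟩),
    ← mul_prod_erase _ (q j) (mem_erase.2 ⟨hij, mem_univ i⟩), hsymm j i, Int.gcd_mul_left,
    Int.isCoprime_iff_gcd_eq_one.1 (isCoprime_prod_erase_erase hcop hij), mul_one,
    Int.natCast_natAbs]

end PairProducts

theorem SimpleGraph.exists_modEq_iff_adj {ι : Type*} [LinearOrder ι] [Finite ι]
    (G : SimpleGraph ι) {q : ι → ι → ℤ} (hsymm : ∀ i j, q i j = q j i)
    (hunit : ∀ i j, i ≠ j → ¬IsUnit (q i j))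
    (hcop : Pairwise (IsCoprime on fun p : {p : ι × ι // p.1 < p.2} => q p.1.1 p.1.2)) :
    ∃ α : ι → ℤ, ∀ i j, i ≠ j → (α i ≡ α j [ZMOD q i j] ↔ G.Adj i j) := by
  classical
  choose α hα using fun k : ι => Int.exists_modEq_of_pairwise_isCoprime hcop
    fun p => if k = p.1.2 ∧ ¬G.Adj p.1.1 p.1.2 then 1 else 0
  have hlt : ∀ i j, i < j → (α i ≡ α j [ZMOD q i j] ↔ G.Adj i j) := by
    intro i j hij
    have hi := hα i ⟨(i, j), hij⟩
    have hj := hα j ⟨(i, j), hij⟩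
    simp only [hij.ne, false_and, if_false, true_and] at hi hj
    by_cases hadj : G.Adj i j
    · simp only [hadj, not_true, if_false] at hj
      exact iff_of_true (hi.trans hj.symm) hadj
    · simp only [hadj, not_false_eq_true, if_true] at hj
      refine iff_of_false (fun h => hunit i j hij.ne (isUnit_of_dvd_one ?_)) hadj
      simpa using (hi.symm.trans (h.trans hj)).dvd
  refine ⟨α, fun i j hij => ?_⟩
  rcases hij.lt_or_gt with h | h
  · exact hlt i j h
  · rw [hsymm, Int.modEq_comm, G.adj_comm]
    exact hlt j i h

/-- Given a simple graph G on [n], pairwise coprime q_{i,j} ≥ 2 (symmetric in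
i,j) and a_i := ∏_{ℓ ≠ i} q_{i,ℓ}, there exist integers α₁,…,α_n such that
for all i ≠ j: α_i ≡ α_j (mod gcd(a_i,a_j)) iff {i,j} ∈ E. -/
theorem stmt8 (n : ℕ) (G : SimpleGraph (Fin n)) (q : Fin n → Fin n → ℤ)
    (hsymm : ∀ i j, q i j = q j i)
    (h2 : ∀ i j, i ≠ j → 2 ≤ q i j)
    (hcop : ∀ i j i' j', i ≠ j → i' ≠ j' →
      ({i, j} : Finset (Fin n)) ≠ {i', j'} → IsCoprime (q i j) (q i' j'))
    (a : Fin n → ℤ) (ha : ∀ i, a i = ∏ ℓ ∈ Finset.univ.erase i, q i ℓ) :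
    ∃ α : Fin n → ℤ, ∀ i j, i ≠ j →
      (α i ≡ α j [ZMOD (Int.gcd (a i) (a j) : ℤ)] ↔ G.Adj i j) := by
  have hunit : ∀ i j, i ≠ j → ¬IsUnit (q i j) := fun i j hij hu => by
    have := h2 i j hij
    rcases Int.isUnit_iff.1 hu with h | h <;> omega
  obtain ⟨α, hα⟩ := G.exists_modEq_iff_adj hsymm hunit (pairwise_isCoprime_of_lt hcop)
  refine ⟨α, fun i j hij => ?_⟩
  rw [ha, ha, gcd_prod_erase_eq_abs hsymm hcop hij, abs_of_pos (by linarith [h2 i j hij])]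
  exact hα i j hij
end

section
/- With the construction of the previous context, a subset S ⊆ [n] of the arithmetic progressions P_{a_i,α_i} (i ∈ S) has nonempty common intersection if and only if S is a clique in G. Hence cliques of G of size k correspond exactly to sub-collections of k pairwise-intersecting progressions with a common point. -/
/-!
A system of congruences `x ≡ r i [ZMOD m i]` is solvable as soon as it is pairwise solvable,
i.e. `r i ≡ r j` modulo `gcd (m i) (m j)`: a solution `x` of part of the system is unique modulo
`L = lcm (m i)`, so one more congruence modulo `m j` can be added once `x ≡ r j` modulo
`gcd L (m j)`, and this holds because `gcd` distributes over `lcm` (prime exponents are combined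
by `min` and `max`). By the choice of the `α i`, pairwise solvability of the progressions indexed
by `S` says exactly that `S` is a clique.
-/

def intProg (a α : ℤ) : Set ℤ := {x | ∃ z : ℤ, x = α + a * z}

theorem Nat.gcd_lcm_dvd_lcm_gcd (a b c : ℕ) : gcd (lcm a b) c ∣ lcm (gcd a c) (gcd b c) := by
  rcases eq_or_ne a 0 with rfl | ha
  · simp [Nat.lcm_eq_left (Nat.gcd_dvd_right b c)]
  rcases eq_or_ne b 0 with rfl | hb
  · simp [Nat.lcm_eq_right (Nat.gcd_dvd_right a c)]
  rcases eq_or_ne c 0 with rfl | hc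
  · simp
  have hac := Nat.gcd_ne_zero_right (m := a) hc
  have hbc := Nat.gcd_ne_zero_right (m := b) hc
  have hab := Nat.lcm_ne_zero ha hb
  rw [← Nat.factorization_le_iff_dvd (Nat.gcd_ne_zero_right hc) (Nat.lcm_ne_zero hac hbc),
    Nat.factorization_gcd hab hc, Nat.factorization_lcm ha hb, Nat.factorization_lcm hac hbc,
    Nat.factorization_gcd ha hc, Nat.factorization_gcd hb hc]
  intro p
  simp only [Finsupp.inf_apply, Finsupp.sup_apply]
  omega

theorem Nat.gcd_finset_lcm_dvd {ι : Type*} {s : Finset ι} {f : ι → ℕ} {c d : ℕ}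
    (h : ∀ i ∈ s, gcd (f i) c ∣ d) : gcd (s.lcm f) c ∣ d := by
  classical
  induction s using Finset.induction_on with
  | empty => simp
  | insert i s _ ih =>
    rw [Finset.lcm_insert]
    exact (Nat.gcd_lcm_dvd_lcm_gcd _ _ c).trans <|
      Nat.lcm_dvd (h i (Finset.mem_insert_self i s))
        (ih fun k hk => h k (Finset.mem_insert_of_mem hk))

theorem Int.exists_modEq_and_modEq_of_modEq_gcd {a b m n : ℤ}
    (h : a ≡ b [ZMOD (Int.gcd m n : ℤ)]) : ∃ x, x ≡ a [ZMOD m] ∧ x ≡ b [ZMOD n] := by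
  obtain ⟨t, ht⟩ := Int.modEq_iff_dvd.mp h
  refine ⟨a + m * m.gcdA n * t, ?_, ?_⟩
  · exact Int.modEq_iff_dvd.mpr ⟨-(m.gcdA n * t), by ring⟩
  · refine Int.modEq_iff_dvd.mpr ⟨m.gcdB n * t, ?_⟩
    linear_combination ht + t * Int.gcd_eq_gcd_ab m n

theorem Int.exists_forall_modEq_of_pairwise_modEq_gcd {ι : Type*} {s : Finset ι} {m r : ι → ℤ}
    (h : ∀ i ∈ s, ∀ j ∈ s, r i ≡ r j [ZMOD (Int.gcd (m i) (m j) : ℤ)]) :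
    ∃ x, ∀ i ∈ s, x ≡ r i [ZMOD m i] := by
  classical
  induction s using Finset.induction_on with
  | empty => exact ⟨0, by simp⟩
  | insert j s _ ih =>
    obtain ⟨x, hx⟩ := ih fun i hi k hk =>
      h i (Finset.mem_insert_of_mem hi) k (Finset.mem_insert_of_mem hk)
    set L := s.lcm fun i => (m i).natAbs
    have hjs := Finset.mem_insert_self j s
    have hcompat : x ≡ r j [ZMOD (Int.gcd L (m j) : ℤ)] := by
      refine Int.modEq_iff_dvd.mpr (Int.natCast_dvd.mpr ?_)
      refine Nat.gcd_finset_lcm_dvd fun i hi => Int.natCast_dvd.mp ?_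
      exact Int.modEq_iff_dvd.mp
        ((hx i hi).of_dvd (Int.gcd_dvd_left _ _) |>.trans (h i (Finset.mem_insert_of_mem hi) j hjs))
    obtain ⟨y, hyx, hyj⟩ := Int.exists_modEq_and_modEq_of_modEq_gcd hcompat
    refine ⟨y, Finset.forall_mem_insert _ _ _ |>.mpr ⟨hyj, fun i hi => ?_⟩⟩
    have hmL : m i ∣ L := Int.natAbs_dvd.mp (Int.natCast_dvd_natCast.mpr (Finset.dvd_lcm hi))
    exact (hyx.of_dvd hmL).trans (hx i hi)

theorem Int.exists_forall_modEq_iff {ι : Type*} {s : Finset ι} {m r : ι → ℤ} :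
    (∃ x, ∀ i ∈ s, x ≡ r i [ZMOD m i]) ↔
      ∀ i ∈ s, ∀ j ∈ s, r i ≡ r j [ZMOD (Int.gcd (m i) (m j) : ℤ)] := by
  refine ⟨fun ⟨x, hx⟩ i hi j hj => ?_, Int.exists_forall_modEq_of_pairwise_modEq_gcd⟩
  exact ((hx i hi).of_dvd (Int.gcd_dvd_left _ _)).symm.trans
    ((hx j hj).of_dvd (Int.gcd_dvd_right _ _))

theorem mem_intProg_iff_modEq {a α x : ℤ} : x ∈ intProg a α ↔ x ≡ α [ZMOD a] := by
  rw [Int.modEq_comm, Int.modEq_iff_dvd]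
  constructor
  · rintro ⟨z, rfl⟩
    exact ⟨z, by ring⟩
  · rintro ⟨z, hz⟩
    exact ⟨z, by linarith⟩

theorem stmt9_general (n : ℕ) (G : SimpleGraph (Fin n)) (a : Fin n → ℤ) (α : Fin n → ℤ)
    (hα : ∀ i j, i ≠ j →
      (α i ≡ α j [ZMOD (Int.gcd (a i) (a j) : ℤ)] ↔ G.Adj i j))
    (S : Finset (Fin n)) :
    (∃ x : ℤ, ∀ i ∈ S, x ∈ intProg (a i) (α i)) ↔ G.IsClique ↑S := by
  simp only [mem_intProg_iff_modEq, Int.exists_forall_modEq_iff]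
  refine ⟨fun h i hi j hj hij => (hα i j hij).mp (h i hi j hj), fun h i hi j hj => ?_⟩
  rcases eq_or_ne i j with rfl | hij
  · rfl
  · exact (hα i j hij).mpr (h hi hj hij)

/-- With pairwise coprime symmetric q_{i,j} ≥ 2, a_i := ∏_{ℓ≠i} q_{i,ℓ} and
integers α_i satisfying α_i ≡ α_j (mod gcd(a_i,a_j)) iff {i,j} ∈ E, a subset
S of the progressions P_{a_i,α_i} has a common point iff S is a clique in G. -/
theorem stmt9 (n : ℕ) (G : SimpleGraph (Fin n)) (q : Fin n → Fin n → ℤ)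
    (hsymm : ∀ i j, q i j = q j i)
    (h2 : ∀ i j, i ≠ j → 2 ≤ q i j)
    (hcop : ∀ i j i' j', i ≠ j → i' ≠ j' →
      ({i, j} : Finset (Fin n)) ≠ {i', j'} → IsCoprime (q i j) (q i' j'))
    (a : Fin n → ℤ) (ha : ∀ i, a i = ∏ ℓ ∈ Finset.univ.erase i, q i ℓ)
    (α : Fin n → ℤ)
    (hα : ∀ i j, i ≠ j →
      (α i ≡ α j [ZMOD (Int.gcd (a i) (a j) : ℤ)] ↔ G.Adj i j))
    (S : Finset (Fin n)) :
    (∃ x : ℤ, ∀ i ∈ S, x ∈ intProg (a i) (α i)) ↔ G.IsClique ↑S :=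
  stmt9_general n G a α hα S
end

section
/- The k-fold intersection problem for integer arithmetic progressions reduces to cliques: for every simple graph G on n vertices and every k ≤ n, G has a clique of size k if and only if the instance (a_i, α_i)_{i=1..n} constructed from G (via pairwise coprime moduli and CRT) has k progressions with nonempty common intersection. In particular the maximum clique size of G equals the maximum number of the constructed progressions with a common point. -/
/-!
Since the moduli `q i j` are pairwise coprime, `gcd (a i) (a j) = q i j` for `i ≠ j`, so `i` and
`j` are adjacent exactly when `α i ≡ α j [ZMOD q i j]`. A common point of the progressions indexed
by `S` forces these congruences on every pair in `S`, so `S` is a clique. Conversely, on a clique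
all pairwise compatibility conditions hold and a Chinese remainder argument yields a common point:
adding the progressions one at a time, `gcd (a i) (∏ a j)` divides `∏ gcd (a i) (a j)`, and this
product divides the required difference because its factors `q i j` are pairwise coprime.
-/

open Finset Function

theorem mem_intProg_iff {a α x : ℤ} : x ∈ intProg a α ↔ a ∣ x - α := by
  refine exists_congr fun z => ?_
  constructor <;> intro h <;> linarith

theorem gcd_prod_dvd_prod_gcd {α ι : Type*} [CommMonoidWithZero α] [GCDMonoid α]
    (c : α) (s : Finset ι) (f : ι → α) :
    gcd c (∏ j ∈ s, f j) ∣ ∏ j ∈ s, gcd c (f j) := by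
  classical
  induction s using Finset.induction_on with
  | empty => simp
  | insert i s his ih =>
    rw [prod_insert his, prod_insert his]
    exact (gcd_mul_dvd_mul_gcd c (f i) _).trans (mul_dvd_mul_left _ ih)

section CRT

variable {R : Type*} [CommRing R] [IsDomain R] [IsBezout R] [GCDMonoid R]

theorem exists_dvd_sub_and_dvd_sub_of_gcd_dvd {m m' x x' : R} (h : gcd m m' ∣ x - x') :
    ∃ z, m ∣ z - x ∧ m' ∣ z - x' := by
  obtain ⟨u, v, huv⟩ := (gcd_dvd_iff_exists m m').1 h
  exact ⟨x - m * u, ⟨-u, by ring⟩, ⟨v, by linear_combination huv⟩⟩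

theorem exists_forall_dvd_sub_of_isCoprime_gcd {ι : Type*} [DecidableEq ι] (a α : ι → R)
    (S : Finset ι)
    (hcop : ∀ i ∈ S, (S.erase i : Set ι).Pairwise (IsCoprime on (fun j ↦ gcd (a i) (a j))))
    (hcompat : ∀ i ∈ S, ∀ j ∈ S, i ≠ j → gcd (a i) (a j) ∣ α i - α j) :
    ∃ x, ∀ i ∈ S, a i ∣ x - α i := by
  induction S using Finset.induction_on with
  | empty => exact ⟨0, by simp⟩
  | insert i S hiS ih =>
    obtain ⟨x, hx⟩ := ih
      (fun j hj => (hcop j (mem_insert_of_mem hj)).mono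
        (by gcongr; exact subset_insert i S))
      (fun j hj j' hj' => hcompat j (mem_insert_of_mem hj) j' (mem_insert_of_mem hj'))
    have hgcd_dvd : ∀ j ∈ S, gcd (a i) (a j) ∣ α i - x := fun j hj => by
      have := dvd_sub (hcompat i (mem_insert_self i S) j (mem_insert_of_mem hj)
        (ne_of_mem_of_not_mem hj hiS).symm) ((gcd_dvd_right _ _).trans (hx j hj))
      rwa [sub_sub_sub_cancel_right] at this
    have hpair : (S : Set ι).Pairwise (IsCoprime on (fun j ↦ gcd (a i) (a j))) := by
      simpa [erase_insert hiS] using hcop i (mem_insert_self i S)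
    obtain ⟨z, hzi, hzS⟩ := exists_dvd_sub_and_dvd_sub_of_gcd_dvd
      ((gcd_prod_dvd_prod_gcd (a i) S a).trans (prod_dvd_of_coprime hpair hgcd_dvd))
    refine ⟨z, forall_mem_insert _ _ _ |>.2 ⟨hzi, fun j hj => ?_⟩⟩
    simpa using dvd_add ((dvd_prod_of_mem a hj).trans hzS) (hx j hj)

end CRT

section Construction

variable {ι : Type*} [Fintype ι] [DecidableEq ι] {q : ι → ι → ℤ} {a : ι → ℤ}

theorem dvd_of_eq_prod_erase (ha : ∀ i, a i = ∏ ℓ ∈ univ.erase i, q i ℓ) {i j : ι}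
    (hij : i ≠ j) : q i j ∣ a i :=
  ha i ▸ dvd_prod_of_mem _ (mem_erase.2 ⟨hij.symm, mem_univ j⟩)

theorem gcd_eq_of_eq_prod_erase (hsymm : ∀ i j, q i j = q j i)
    (hcop : ∀ i j i' j', i ≠ j → i' ≠ j' →
      ({i, j} : Finset ι) ≠ {i', j'} → IsCoprime (q i j) (q i' j'))
    (ha : ∀ i, a i = ∏ ℓ ∈ univ.erase i, q i ℓ) {i j : ι} (hij : i ≠ j) (hq : 0 ≤ q i j) :
    gcd (a i) (a j) = q i j := by
  have hq_dvd : q i j ∣ gcd (a i) (a j) :=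
    dvd_gcd (dvd_of_eq_prod_erase ha hij) (hsymm i j ▸ dvd_of_eq_prod_erase ha hij.symm)
  -- `a i` is `q i j` times a product of moduli that share no index pair with `a j`.
  set A := ∏ ℓ ∈ (univ.erase i).erase j, q i ℓ
  have hai : a i = q i j * A := by
    rw [ha i, mul_prod_erase _ _ (mem_erase.2 ⟨hij.symm, mem_univ j⟩)]
  have hA : IsCoprime A (a j) := by
    rw [ha j]
    refine IsCoprime.prod_left fun ℓ hℓ => IsCoprime.prod_right fun m hm => ?_
    simp only [mem_erase, mem_univ, and_true] at hℓ hm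
    exact hcop i ℓ j m hℓ.2.symm hm.symm
      (ne_of_mem_of_not_mem' (mem_insert_self j {m}) (by simp [hij.symm, hℓ.1.symm])).symm
  have hgcd_dvd : gcd (a i) (a j) ∣ q i j :=
    (hA.of_isCoprime_of_dvd_right (gcd_dvd_right _ _)).symm.dvd_of_dvd_mul_right
      (hai ▸ gcd_dvd_left _ _)
  exact Int.dvd_antisymm (Int.gcd_nonneg _ _) hq hgcd_dvd hq_dvd

end Construction

theorem isClique_iff_exists_mem_intProg {ι : Type*} [Fintype ι] [DecidableEq ι]
    (G : SimpleGraph ι) {q : ι → ι → ℤ} (hsymm : ∀ i j, q i j = q j i)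
    (hq : ∀ i j, i ≠ j → 0 ≤ q i j)
    (hcop : ∀ i j i' j', i ≠ j → i' ≠ j' →
      ({i, j} : Finset ι) ≠ {i', j'} → IsCoprime (q i j) (q i' j'))
    {a : ι → ℤ} (ha : ∀ i, a i = ∏ ℓ ∈ univ.erase i, q i ℓ) {α : ι → ℤ}
    (hα : ∀ i j, i ≠ j → (α i ≡ α j [ZMOD (Int.gcd (a i) (a j) : ℤ)] ↔ G.Adj i j))
    (S : Finset ι) :
    G.IsClique (S : Set ι) ↔ ∃ x, ∀ i ∈ S, x ∈ intProg (a i) (α i) := by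
  have hgcd : ∀ i j, i ≠ j → gcd (a i) (a j) = q i j := fun i j hij =>
    gcd_eq_of_eq_prod_erase hsymm hcop ha hij (hq i j hij)
  have hadj : ∀ i j, i ≠ j → (G.Adj i j ↔ q i j ∣ α j - α i) := fun i j hij => by
    rw [← hα i j hij, Int.modEq_iff_dvd, Int.coe_gcd, hgcd i j hij]
  simp only [mem_intProg_iff]
  constructor
  · intro hS
    refine exists_forall_dvd_sub_of_isCoprime_gcd a α S (fun i _ j hj j' hj' hjj' => ?_)
      (fun i hi j hj hij => ?_)
    · rw [mem_coe, mem_erase] at hj hj'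
      simp only [onFun, hgcd i j hj.1.symm, hgcd i j' hj'.1.symm]
      exact hcop i j i j' hj.1.symm hj'.1.symm
        (ne_of_mem_of_not_mem' (mem_insert_of_mem (mem_singleton_self j'))
          (by simp [hj'.1, hjj'.symm])).symm
    · rw [hgcd i j hij, ← neg_sub, dvd_neg]
      exact (hadj i j hij).1 (hS hi hj hij)
  · rintro ⟨x, hx⟩ i hi j hj hij
    refine (hadj i j hij).2 ?_
    have hxi := (dvd_of_eq_prod_erase ha hij).trans (hx i hi)
    have hxj := (hsymm i j ▸ dvd_of_eq_prod_erase ha hij.symm).trans (hx j hj)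
    simpa using dvd_sub hxi hxj

/-- Reduction from Clique: for a simple graph G on n vertices, pairwise coprime
symmetric q_{i,j} ≥ 2, a_i := ∏_{ℓ≠i} q_{i,ℓ} and α_i chosen (by CRT) with
α_i ≡ α_j (mod gcd(a_i,a_j)) iff {i,j} ∈ E, G has a clique of size k iff k of
the progressions P_{a_i,α_i} have a common point; in particular, the maximum
clique size equals the maximum number of progressions with a common point. -/
theorem stmt17 (n : ℕ) (G : SimpleGraph (Fin n)) (q : Fin n → Fin n → ℤ)
    (hsymm : ∀ i j, q i j = q j i)
    (h2 : ∀ i j, i ≠ j → 2 ≤ q i j)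
    (hcop : ∀ i j i' j', i ≠ j → i' ≠ j' →
      ({i, j} : Finset (Fin n)) ≠ {i', j'} → IsCoprime (q i j) (q i' j'))
    (a : Fin n → ℤ) (ha : ∀ i, a i = ∏ ℓ ∈ Finset.univ.erase i, q i ℓ)
    (α : Fin n → ℤ)
    (hα : ∀ i j, i ≠ j →
      (α i ≡ α j [ZMOD (Int.gcd (a i) (a j) : ℤ)] ↔ G.Adj i j)) :
    ∀ k ≤ n,
      ((∃ S : Finset (Fin n), S.card = k ∧ G.IsClique ↑S) ↔
        (∃ S : Finset (Fin n), S.card = k ∧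
          ∃ x : ℤ, ∀ i ∈ S, x ∈ intProg (a i) (α i))) := fun k _ =>
  exists_congr fun S =>
    and_congr_right fun _ => isClique_iff_exists_mem_intProg G hsymm
      (fun i j hij => zero_le_two.trans (h2 i j hij)) hcop ha hα S
end
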